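/- arXiv:0908.3386 — 2 statements merged into one kernel-verified Lean document; each statement's English description precedes it below -/
import Mathlib

section
/- If S ⊆ ℝ^n is a semidefinitely representable set (i.e., a projection of a spectrahedron), then the conic hull cc(S) of S (the smallest convex cone containing S, i.e., the set of all nonnegative combinations of elements of S) is also a semidefinitely representable set. -/
open Matrix Finset

section Helpers

lemma psd_smul {d : Type*} [Fintype d] {M : Matrix d d ℝ} (hM : M.PosSemidef) {c : ℝ}
    (hc : 0 ≤ c) : (c • M).PosSemidef := by
  rw [Matrix.posSemidef_iff_dotProduct_mulVec]
  constructor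
  · have h := hM.1
    unfold Matrix.IsHermitian at *
    rw [conjTranspose_smul, h]
    simp
  · intro x
    rw [Matrix.smul_mulVec, dotProduct_smul]
    exact mul_nonneg hc (hM.dotProduct_mulVec_nonneg x)

lemma psd_sum {ι : Type*} {d : Type*} [Fintype d] [DecidableEq d] (s : Finset ι)
    (f : ι → Matrix d d ℝ) (h : ∀ i ∈ s, (f i).PosSemidef) :
    (∑ i ∈ s, f i).PosSemidef := by
  classical
  induction s using Finset.induction with
  | empty => simpa using Matrix.PosSemidef.zero
  | @insert a s ha ih =>
    rw [Finset.sum_insert ha]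
    exact (h a (Finset.mem_insert_self a s)).add (ih fun i hi => h i (Finset.mem_insert_of_mem hi))

lemma psd_two {t u s : ℝ} (ht : 0 ≤ t) (hs : 0 ≤ s) (h : u * u ≤ t * s) :
    (!![t,u;u,s] : Matrix (Fin 2) (Fin 2) ℝ).PosSemidef := by
  rw [Matrix.posSemidef_iff_dotProduct_mulVec]
  constructor
  · ext i j
    fin_cases i <;> fin_cases j <;> simp [Matrix.conjTranspose_apply]
  · intro v
    have hv : star v ⬝ᵥ ((!![t,u;u,s] : Matrix (Fin 2) (Fin 2) ℝ) *ᵥ v)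
        = t * (v 0)^2 + 2*u*(v 0)*(v 1) + s*(v 1)^2 := by
      simp [dotProduct, Matrix.mulVec, Fin.sum_univ_two]
      ring
    rw [hv]
    rcases eq_or_lt_of_le ht with h0 | h0
    · have hu : u = 0 := by nlinarith [sq_nonneg u]
      rw [← h0, hu]
      nlinarith [mul_nonneg hs (sq_nonneg (v 1))]
    · nlinarith [sq_nonneg (t * v 0 + u * v 1), mul_nonneg (sub_nonneg.2 h) (sq_nonneg (v 1))]

lemma psd_two_t {t u s : ℝ} (h : (!![t,u;u,s] : Matrix (Fin 2) (Fin 2) ℝ).PosSemidef) :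
    0 ≤ t := by
  have := h.dotProduct_mulVec_nonneg ![1, 0]
  simpa [dotProduct, Matrix.mulVec, Fin.sum_univ_two] using this

lemma psd_two_u {t u s : ℝ} (h : (!![t,u;u,s] : Matrix (Fin 2) (Fin 2) ℝ).PosSemidef)
    (ht : t = 0) : u = 0 := by
  have h2 := h.dotProduct_mulVec_nonneg ![-(s+1), 2*u]
  simp [dotProduct, Matrix.mulVec, Fin.sum_univ_two, ht] at h2
  nlinarith [sq_nonneg u]

lemma psd_fromBlocks {a b : Type*} [Fintype a] [Fintype b] [DecidableEq a] [DecidableEq b]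
    {K : Matrix a a ℝ} {D : Matrix b b ℝ} (hK : K.PosSemidef) (hD : D.PosSemidef) :
    (Matrix.fromBlocks K 0 0 D).PosSemidef := by
  rw [Matrix.posSemidef_iff_dotProduct_mulVec]
  constructor
  · rw [Matrix.IsHermitian, Matrix.fromBlocks_conjTranspose, hK.1, hD.1]
    simp
  · intro v
    rw [← Sum.elim_comp_inl_inr v, Matrix.fromBlocks_mulVec]
    simp only [Function.star_sumElim, Matrix.zero_mulVec, add_zero, zero_add]
    rw [sumElim_dotProduct_sumElim]
    exact add_nonneg (hK.dotProduct_mulVec_nonneg _) (hD.dotProduct_mulVec_nonneg _)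

lemma psd_blockDiagonal {b o : Type*} [Fintype b] [Fintype o] [DecidableEq b] [DecidableEq o]
    {D : o → Matrix b b ℝ} (h : ∀ a, (D a).PosSemidef) :
    (Matrix.blockDiagonal D).PosSemidef := by
  rw [Matrix.posSemidef_iff_dotProduct_mulVec]
  constructor
  · rw [Matrix.IsHermitian, Matrix.conjTranspose_eq_transpose_of_trivial,
      Matrix.blockDiagonal_transpose]
    exact congrArg _ (funext fun a => by
      rw [← Matrix.conjTranspose_eq_transpose_of_trivial, (h a).1])
  · intro v
    have key : star v ⬝ᵥ (Matrix.blockDiagonal D) *ᵥ v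
        = ∑ a, (star fun q => v (q, a)) ⬝ᵥ (D a *ᵥ fun q => v (q, a)) := by
      simp only [dotProduct, Matrix.mulVec, Matrix.blockDiagonal_apply,
        Fintype.sum_prod_type, Pi.star_apply, ite_mul, zero_mul, Finset.sum_ite_eq,
        Finset.mem_univ, if_true]
      rw [Finset.sum_comm]
    rw [key]
    exact Finset.sum_nonneg fun a _ => (h a).dotProduct_mulVec_nonneg _

lemma swap_eq {k N P : ℕ} (c : Fin N → ℝ) (v : Fin N → Fin P → ℝ) (t : ℝ)
    (D : Fin P → Matrix (Fin k) (Fin k) ℝ) :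
    t • ∑ i, c i • ∑ p, v i p • D p = ∑ p, (t * ∑ i, c i * v i p) • D p := by
  calc t • ∑ i, c i • ∑ p, v i p • D p
      = ∑ i, ∑ p, (t * (c i * v i p)) • D p := by
        rw [Finset.smul_sum]
        refine Finset.sum_congr rfl fun i _ => ?_
        rw [Finset.smul_sum, Finset.smul_sum]
        exact Finset.sum_congr rfl fun p _ => by rw [smul_smul, smul_smul, mul_assoc]
    _ = ∑ p, ∑ i, (t * (c i * v i p)) • D p := Finset.sum_comm
    _ = ∑ p, (t * ∑ i, c i * v i p) • D p := by
        refine Finset.sum_congr rfl fun p _ => ?_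
        rw [Finset.mul_sum, Finset.sum_smul]

lemma comb_eq {k n m N : ℕ} (A : Matrix (Fin k) (Fin k) ℝ)
    (B : Fin n → Matrix (Fin k) (Fin k) ℝ) (C : Fin m → Matrix (Fin k) (Fin k) ℝ)
    (c : Fin N → ℝ) (s : Fin N → Fin n → ℝ) (w : Fin N → Fin m → ℝ) {t : ℝ} (ht : t ≠ 0)
    (hts : ∑ i, c i = t) :
    A + ∑ p, (t⁻¹ • ∑ i, c i • s i) p • B p + ∑ j, (t⁻¹ • ∑ i, c i • w i) j • C j
      = t⁻¹ • ∑ i, c i • (A + ∑ p, s i p • B p + ∑ j, w i j • C j) := by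
  have hA : t⁻¹ • ∑ i : Fin N, c i • A = A := by
    rw [← Finset.sum_smul, hts, smul_smul, inv_mul_cancel₀ ht, one_smul]
  have hBc : ∀ p, (t⁻¹ • ∑ i, c i • s i) p = t⁻¹ * ∑ i, c i * s i p := by
    intro p; simp [Finset.sum_apply]
  have hCc : ∀ j, (t⁻¹ • ∑ i, c i • w i) j = t⁻¹ * ∑ i, c i * w i j := by
    intro j; simp [Finset.sum_apply]
  simp only [smul_add, Finset.sum_add_distrib]
  rw [hA, swap_eq, swap_eq]
  simp only [hBc, hCc]

end Helpers

section Construction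

variable {n k m : ℕ}

/-- The `B`-part matrices of the conic-hull representation, over a sum index type. -/
def sdrB (B : Fin n → Matrix (Fin k) (Fin k) ℝ) (i : Fin n) :
    Matrix (Fin k ⊕ Fin 2 × Fin n) (Fin k ⊕ Fin 2 × Fin n) ℝ :=
  Matrix.fromBlocks (B i) 0 0
    (Matrix.blockDiagonal fun a =>
      !![0, if a = i then 1 else 0; if a = i then 1 else 0, 0])

/-- The `C`-part matrices, with two extra slack variables `t` (homogenization) and `s`. -/
def sdrC (A : Matrix (Fin k) (Fin k) ℝ) (C : Fin m → Matrix (Fin k) (Fin k) ℝ) :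
    Fin (m + 2) → Matrix (Fin k ⊕ Fin 2 × Fin n) (Fin k ⊕ Fin 2 × Fin n) ℝ :=
  Fin.snoc (Fin.snoc (fun j => Matrix.fromBlocks (C j) 0 0
        (Matrix.blockDiagonal fun _ => (0 : Matrix (Fin 2) (Fin 2) ℝ)))
      (Matrix.fromBlocks A 0 0 (Matrix.blockDiagonal fun _ => !![1,0;0,0])))
    (Matrix.fromBlocks 0 0 0 (Matrix.blockDiagonal fun _ => !![0,0;0,1]))

lemma sdr_key (A : Matrix (Fin k) (Fin k) ℝ)
    (B : Fin n → Matrix (Fin k) (Fin k) ℝ) (C : Fin m → Matrix (Fin k) (Fin k) ℝ)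
    (x : Fin n → ℝ) (z : Fin (m + 2) → ℝ) :
    (0 : Matrix (Fin k ⊕ Fin 2 × Fin n) (Fin k ⊕ Fin 2 × Fin n) ℝ)
        + ∑ i, x i • sdrB B i + ∑ j, z j • sdrC (n := n) A C j =
      Matrix.fromBlocks
        (z (Fin.last m).castSucc • A + ∑ i, x i • B i
            + ∑ j : Fin m, z j.castSucc.castSucc • C j)
        0 0
        (Matrix.blockDiagonal fun a =>
          !![z (Fin.last m).castSucc, x a; x a, z (Fin.last (m+1))]) := by
  ext i j
  rcases i with a | ⟨p, a⟩ <;> rcases j with b | ⟨q, b⟩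
  · simp only [sdrB, sdrC, Matrix.add_apply, Matrix.sum_apply, Matrix.smul_apply,
      Matrix.zero_apply, smul_eq_mul, Fin.sum_univ_castSucc, Fin.snoc_castSucc, Fin.snoc_last,
      Matrix.fromBlocks_apply₁₁]
    ring
  · simp [sdrB, sdrC, Matrix.sum_apply, Fin.sum_univ_castSucc, Fin.snoc_castSucc, Fin.snoc_last]
  · simp [sdrB, sdrC, Matrix.sum_apply, Fin.sum_univ_castSucc, Fin.snoc_castSucc, Fin.snoc_last]
  · simp only [sdrB, sdrC, Matrix.add_apply, Matrix.sum_apply, Matrix.smul_apply,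
      Matrix.zero_apply, smul_eq_mul, Fin.sum_univ_castSucc, Fin.snoc_castSucc, Fin.snoc_last,
      Matrix.fromBlocks_apply₂₂, Matrix.blockDiagonal_apply]
    rcases eq_or_ne a b with rfl | hab
    · fin_cases p <;> fin_cases q <;>
        simp [Finset.sum_ite_eq, mul_ite]
    · simp [hab]


lemma isSymm_two {a b d : ℝ} : (!![a,b;b,d] : Matrix (Fin 2) (Fin 2) ℝ).IsSymm := by
  rw [Matrix.IsSymm]
  ext p q
  fin_cases p <;> fin_cases q <;> simp

lemma fbd_symm {P : Matrix (Fin k) (Fin k) ℝ} {D : Fin n → Matrix (Fin 2) (Fin 2) ℝ}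
    (hP : P.IsSymm) (hD : ∀ a, (D a).IsSymm) :
    (Matrix.fromBlocks P 0 0 (Matrix.blockDiagonal D)).IsSymm := by
  rw [Matrix.IsSymm, Matrix.fromBlocks_transpose, Matrix.blockDiagonal_transpose,
    Matrix.transpose_zero, hP]
  exact congrArg (Matrix.fromBlocks P 0 0)
    (congrArg Matrix.blockDiagonal (funext fun a => hD a))

lemma sdrB_symm (B : Fin n → Matrix (Fin k) (Fin k) ℝ) (hB : ∀ i, (B i).IsSymm) (i : Fin n) :
    (sdrB B i).IsSymm :=
  fbd_symm (hB i) (fun _ => isSymm_two)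

lemma sdrC_symm (A : Matrix (Fin k) (Fin k) ℝ) (C : Fin m → Matrix (Fin k) (Fin k) ℝ)
    (hA : A.IsSymm) (hC : ∀ j, (C j).IsSymm) (j : Fin (m + 2)) :
    (sdrC (n := n) A C j).IsSymm := by
  unfold sdrC
  induction j using Fin.lastCases with
  | last => rw [Fin.snoc_last]; exact fbd_symm Matrix.isSymm_zero (fun _ => isSymm_two)
  | cast j =>
    rw [Fin.snoc_castSucc]
    induction j using Fin.lastCases with
    | last => rw [Fin.snoc_last]; exact fbd_symm hA (fun _ => isSymm_two)
    | cast j => rw [Fin.snoc_castSucc]; exact fbd_symm (hC j) (fun _ => Matrix.isSymm_zero)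

end Construction


/-- A set `S ⊆ ℝ^n` is *semidefinitely representable* (a projection of a spectrahedron)
if there are `m, k ∈ ℕ` and real symmetric `k × k` matrices `A, B₁, …, Bₙ, C₁, …, Cₘ`
with `S = {x : ∃ z ∈ ℝ^m, A + Σᵢ xᵢ Bᵢ + Σⱼ zⱼ Cⱼ ⪰ 0}`. -/
def IsSDR {n : ℕ} (S : Set (Fin n → ℝ)) : Prop :=
  ∃ (k m : ℕ) (A : Matrix (Fin k) (Fin k) ℝ)
    (B : Fin n → Matrix (Fin k) (Fin k) ℝ) (C : Fin m → Matrix (Fin k) (Fin k) ℝ),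
    A.IsSymm ∧ (∀ i, (B i).IsSymm) ∧ (∀ j, (C j).IsSymm) ∧
    S = {x : Fin n → ℝ | ∃ z : Fin m → ℝ,
      (A + ∑ i, x i • B i + ∑ j, z j • C j).PosSemidef}

/-- The conic hull of `S`: all nonnegative combinations of elements of `S`. -/
def conicHullSet {n : ℕ} (S : Set (Fin n → ℝ)) : Set (Fin n → ℝ) :=
  {x | ∃ (N : ℕ) (c : Fin N → ℝ) (s : Fin N → (Fin n → ℝ)),
    (∀ i, 0 ≤ c i) ∧ (∀ i, s i ∈ S) ∧ x = ∑ i, c i • s i}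

/-- If `S ⊆ ℝ^n` is a projection of a spectrahedron, then so is its conic hull. -/
theorem conicHull_isSDR {n : ℕ} (S : Set (Fin n → ℝ)) (hS : IsSDR S) :
    IsSDR (conicHullSet S) := by
  classical
  obtain ⟨k, m, A, B, C, hA, hB, hC, hSet⟩ := hS
  set e : (Fin k ⊕ Fin 2 × Fin n) ≃ Fin (k + 2 * n) :=
    (Equiv.sumCongr (Equiv.refl (Fin k)) finProdFinEquiv).trans finSumFinEquiv with he
  refine ⟨k + 2 * n, m + 2, 0,
    fun i => (sdrB B i).submatrix e.symm e.symm,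
    fun j => (sdrC (n := n) A C j).submatrix e.symm e.symm,
    Matrix.isSymm_zero,
    fun i => (sdrB_symm B hB i).submatrix e.symm,
    fun j => (sdrC_symm A C hA hC j).submatrix e.symm, ?_⟩
  -- rewrite the representation through the reindexing
  have hcomb : ∀ (x : Fin n → ℝ) (z : Fin (m + 2) → ℝ),
      (0 : Matrix (Fin (k + 2*n)) (Fin (k + 2*n)) ℝ)
          + ∑ i, x i • (sdrB B i).submatrix e.symm e.symm
          + ∑ j, z j • (sdrC (n := n) A C j).submatrix e.symm e.symm
        = ((0 : Matrix (Fin k ⊕ Fin 2 × Fin n) (Fin k ⊕ Fin 2 × Fin n) ℝ)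
            + ∑ i, x i • sdrB B i + ∑ j, z j • sdrC (n := n) A C j).submatrix e.symm e.symm := by
    intro x z
    ext a b
    simp [Matrix.submatrix_apply, Matrix.sum_apply]
  have hiff : ∀ x : Fin n → ℝ,
      (∃ z : Fin (m + 2) → ℝ,
        ((0 : Matrix (Fin (k + 2*n)) (Fin (k + 2*n)) ℝ)
          + ∑ i, x i • (sdrB B i).submatrix e.symm e.symm
          + ∑ j, z j • (sdrC (n := n) A C j).submatrix e.symm e.symm).PosSemidef)
      ↔ (∃ z : Fin (m + 2) → ℝ,
        (Matrix.fromBlocks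
          (z (Fin.last m).castSucc • A + ∑ i, x i • B i
              + ∑ j : Fin m, z j.castSucc.castSucc • C j)
          0 0
          (Matrix.blockDiagonal fun a =>
            !![z (Fin.last m).castSucc, x a; x a, z (Fin.last (m+1))])).PosSemidef) := by
    intro x
    refine exists_congr fun z => ?_
    rw [hcomb x z, Matrix.posSemidef_submatrix_equiv e.symm, sdr_key A B C x z]
  ext x
  simp only [Set.mem_setOf_eq]
  rw [hiff x]
  constructor
  · rintro ⟨N, c, s, hc, hsS, rfl⟩
    simp only [hSet, Set.mem_setOf_eq] at hsS
    choose w hw using hsS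
    rcases eq_or_lt_of_le (Finset.sum_nonneg fun i _ => hc i) with ht0 | htpos
    · -- total weight zero : the combination is 0
      have hc0 : ∀ i ∈ Finset.univ, c i = 0 :=
        (Finset.sum_eq_zero_iff_of_nonneg fun i _ => hc i).mp ht0.symm
      have hx : ∑ i, c i • s i = (0 : Fin n → ℝ) :=
        Finset.sum_eq_zero fun i hi => by rw [hc0 i hi, zero_smul]
      refine ⟨0, ?_⟩
      have hM : Matrix.fromBlocks
          ((0 : Fin (m+2) → ℝ) (Fin.last m).castSucc • A
              + ∑ i, (∑ i, c i • s i) i • B i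
              + ∑ j : Fin m, (0 : Fin (m+2) → ℝ) j.castSucc.castSucc • C j)
          0 0
          (Matrix.blockDiagonal fun a =>
            !![(0 : Fin (m+2) → ℝ) (Fin.last m).castSucc, (∑ i, c i • s i) a;
              (∑ i, c i • s i) a, (0 : Fin (m+2) → ℝ) (Fin.last (m+1))])
          = (0 : Matrix (Fin k ⊕ Fin 2 × Fin n) (Fin k ⊕ Fin 2 × Fin n) ℝ) := by
        have h22 : (!![(0:ℝ),0;0,0] : Matrix (Fin 2) (Fin 2) ℝ) = 0 := by
          ext p q; fin_cases p <;> fin_cases q <;> simp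
        simp only [hx, Pi.zero_apply, zero_smul, Finset.sum_const_zero, add_zero, zero_add,
          smul_zero, h22]
        rw [show (fun _ : Fin n => (0 : Matrix (Fin 2) (Fin 2) ℝ)) = 0 from rfl,
          Matrix.blockDiagonal_zero, Matrix.fromBlocks_zero]
      rw [hM]
      exact Matrix.PosSemidef.zero
    · -- positive total weight
      set t : ℝ := ∑ i, c i with hts
      have htne : t ≠ 0 := ne_of_gt htpos
      have hyS : ∃ zy : Fin m → ℝ,
          (A + ∑ p, (t⁻¹ • ∑ i, c i • s i) p • B p + ∑ j, zy j • C j).PosSemidef := by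
        refine ⟨t⁻¹ • ∑ i, c i • w i, ?_⟩
        rw [comb_eq A B C c s w htne hts.symm]
        exact psd_smul (psd_sum _ _ fun i _ => psd_smul (hw i) (hc i))
          (inv_nonneg.mpr htpos.le)
      obtain ⟨zy, hzy⟩ := hyS
      set y : Fin n → ℝ := t⁻¹ • ∑ i, c i • s i with hy
      have hxy : ∀ a, (∑ i, c i • s i) a = t * y a := by
        intro a
        rw [hy]
        simp only [Pi.smul_apply, smul_eq_mul, Finset.sum_apply]
        rw [← mul_assoc, mul_inv_cancel₀ htne, one_mul]
      refine ⟨Fin.snoc (Fin.snoc (fun j => t * zy j) t) (t * ∑ p, y p ^ 2), ?_⟩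
      simp only [Fin.snoc_castSucc, Fin.snoc_last]
      apply psd_fromBlocks
      · have hK : t • A + ∑ i, (∑ i, c i • s i) i • B i + ∑ j : Fin m, (t * zy j) • C j
            = t • (A + ∑ p, y p • B p + ∑ j, zy j • C j) := by
          simp only [smul_add, Finset.smul_sum, smul_smul, hxy]
        rw [hK]
        exact psd_smul hzy htpos.le
      · apply psd_blockDiagonal
        intro a
        refine psd_two htpos.le ?_ ?_
        · exact mul_nonneg htpos.le (Finset.sum_nonneg fun p _ => sq_nonneg _)
        · have hsingle : y a ^ 2 ≤ ∑ p, y p ^ 2 :=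
            Finset.single_le_sum (fun p _ => sq_nonneg (y p)) (Finset.mem_univ a)
          rw [hxy a]
          nlinarith [mul_le_mul_of_nonneg_left hsingle (mul_self_nonneg t)]
  · rintro ⟨z, hz⟩
    set t : ℝ := z (Fin.last m).castSucc with htdef
    have hKsub : (Matrix.fromBlocks
        (t • A + ∑ i, x i • B i + ∑ j : Fin m, z j.castSucc.castSucc • C j)
        0 0
        (Matrix.blockDiagonal fun a => !![t, x a; x a, z (Fin.last (m+1))])).submatrix
          (Sum.inl : Fin k → Fin k ⊕ Fin 2 × Fin n) Sum.inl
        = t • A + ∑ i, x i • B i + ∑ j : Fin m, z j.castSucc.castSucc • C j := by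
      ext a b; simp
    have hK : (t • A + ∑ i, x i • B i + ∑ j : Fin m, z j.castSucc.castSucc • C j).PosSemidef := by
      rw [← hKsub]; exact hz.submatrix _
    have hblk : ∀ a : Fin n, (!![t, x a; x a, z (Fin.last (m+1))]).PosSemidef := by
      intro a
      have h2 := hz.submatrix (fun p : Fin 2 => (Sum.inr (p, a) : Fin k ⊕ Fin 2 × Fin n))
      have heq : (Matrix.fromBlocks
          (t • A + ∑ i, x i • B i + ∑ j : Fin m, z j.castSucc.castSucc • C j)
          0 0
          (Matrix.blockDiagonal fun a => !![t, x a; x a, z (Fin.last (m+1))])).submatrix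
            (fun p : Fin 2 => (Sum.inr (p, a) : Fin k ⊕ Fin 2 × Fin n))
            (fun p : Fin 2 => (Sum.inr (p, a) : Fin k ⊕ Fin 2 × Fin n))
          = !![t, x a; x a, z (Fin.last (m+1))] := by
        ext p q; simp [Matrix.blockDiagonal_apply]
      rw [heq] at h2
      exact h2
    by_cases htpos : 0 < t
    · have htne : t ≠ 0 := ne_of_gt htpos
      have hyS : (t⁻¹ • x) ∈ S := by
        rw [hSet]
        refine ⟨t⁻¹ • fun j => z j.castSucc.castSucc, ?_⟩
        have hKey : A + ∑ i, (t⁻¹ • x) i • B i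
            + ∑ j, (t⁻¹ • fun j : Fin m => z j.castSucc.castSucc) j • C j
            = t⁻¹ • (t • A + ∑ i, x i • B i + ∑ j : Fin m, z j.castSucc.castSucc • C j) := by
          simp only [smul_add, Finset.smul_sum, smul_smul, inv_mul_cancel₀ htne, one_smul,
            Pi.smul_apply, smul_eq_mul]
        rw [hKey]
        exact psd_smul hK (inv_nonneg.mpr htpos.le)
      refine ⟨1, fun _ => t, fun _ => t⁻¹ • x, fun _ => htpos.le, fun _ => hyS, ?_⟩
      simp [smul_smul, mul_inv_cancel₀ htne]
    · have hx0 : ∀ a : Fin n, x a = 0 := fun a =>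
        psd_two_u (hblk a) (le_antisymm (not_lt.mp htpos) (psd_two_t (hblk a)))
      refine ⟨0, Fin.elim0, Fin.elim0, fun i => i.elim0, fun i => i.elim0, ?_⟩
      simp only [Finset.univ_eq_empty, Finset.sum_empty]
      exact funext hx0
end

section
/- If S₁, …, Sₜ ⊆ ℝ^n are semidefinitely representable sets (projections of spectrahedra), then the convex hull conv(S₁ ∪ ⋯ ∪ Sₜ) of their union is also a semidefinitely representable set. -/
open Matrix Finset

namespace SDRProof

lemma psd_smul {κ : Type} [Fintype κ] {A : Matrix κ κ ℝ} (hA : A.PosSemidef) {c : ℝ}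
    (hc : 0 ≤ c) : (c • A).PosSemidef := by
  refine Matrix.PosSemidef.of_dotProduct_mulVec_nonneg ?_ (fun x => ?_)
  · unfold Matrix.IsHermitian
    rw [conjTranspose_smul, hA.1]
    simp
  · rw [smul_mulVec, dotProduct_smul, smul_eq_mul]
    exact mul_nonneg hc (hA.dotProduct_mulVec_nonneg x)

lemma isSymm_sum {κ σ : Type} (s : Finset σ) (f : σ → Matrix κ κ ℝ)
    (h : ∀ i ∈ s, (f i).IsSymm) : (∑ i ∈ s, f i).IsSymm := by
  classical
  induction s using Finset.induction with
  | empty => simpa using Matrix.isSymm_zero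
  | insert _ _ hx ih =>
    rw [Finset.sum_insert hx]
    exact (h _ (Finset.mem_insert_self _ _)).add (ih fun i hi => h i (Finset.mem_insert_of_mem hi))

lemma psd_fromBlocks_iff {κ₁ κ₂ : Type} [Fintype κ₁] [Fintype κ₂]
    {A : Matrix κ₁ κ₁ ℝ} {D : Matrix κ₂ κ₂ ℝ} :
    (Matrix.fromBlocks A 0 0 D).PosSemidef ↔ A.PosSemidef ∧ D.PosSemidef := by
  constructor
  · intro h
    constructor
    · have := h.submatrix (Sum.inl : κ₁ → κ₁ ⊕ κ₂)
      convert this using 1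
      ext i j; rfl
    · have := h.submatrix (Sum.inr : κ₂ → κ₁ ⊕ κ₂)
      convert this using 1
      ext i j; rfl
  · rintro ⟨hA, hD⟩
    refine Matrix.PosSemidef.of_dotProduct_mulVec_nonneg ?_ (fun x => ?_)
    · unfold Matrix.IsHermitian
      rw [Matrix.fromBlocks_conjTranspose]
      rw [hA.1, hD.1]
      simp
    · have hx : x = Sum.elim (fun i => x (Sum.inl i)) (fun i => x (Sum.inr i)) := by
        ext (i | i) <;> rfl
      rw [hx, Matrix.fromBlocks_mulVec]
      simp only [Matrix.zero_mulVec, add_zero, zero_add]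
      have hs : star (Sum.elim (fun i => x (Sum.inl i)) (fun i => x (Sum.inr i)))
          = Sum.elim (star fun i => x (Sum.inl i)) (star fun i => x (Sum.inr i)) := by
        ext (i | i) <;> rfl
      rw [hs, sumElim_dotProduct_sumElim]
      exact add_nonneg (hA.dotProduct_mulVec_nonneg _) (hD.dotProduct_mulVec_nonneg _)

lemma psd_one_dim {r : ℝ} : (Matrix.of fun (_ _ : Fin 1) => r).PosSemidef ↔ 0 ≤ r := by
  constructor
  · intro h
    have := h.dotProduct_mulVec_nonneg (fun _ => 1)
    simpa [Matrix.mulVec, dotProduct] using this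
  · intro h
    refine Matrix.PosSemidef.of_dotProduct_mulVec_nonneg ?_ (fun x => ?_)
    · unfold Matrix.IsHermitian
      ext i j
      rfl
    · have : star x ⬝ᵥ (Matrix.of fun (_ _ : Fin 1) => r) *ᵥ x = r * (x 0 * x 0) := by
        simp [Matrix.mulVec, dotProduct, Fin.sum_univ_one]
        ring
      rw [this]
      nlinarith [sq_nonneg (x 0)]

/-- quadratic form of explicit 2x2 -/
lemma quad2 (a b c : ℝ) (x : Fin 2 → ℝ) :
    star x ⬝ᵥ (Matrix.of ![![a, b], ![b, c]]) *ᵥ x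
      = a * (x 0 * x 0) + 2 * b * (x 0 * x 1) + c * (x 1 * x 1) := by
  simp [Matrix.mulVec, dotProduct, Fin.sum_univ_two]
  ring

lemma schur_lam_nonneg {a b c : ℝ} (h : (Matrix.of ![![a, b], ![b, c]]).PosSemidef) : 0 ≤ c := by
  have := h.dotProduct_mulVec_nonneg ![0, 1]
  rw [quad2] at this
  simpa using this

lemma schur_b_eq_zero {a b c : ℝ} (h : (Matrix.of ![![a, b], ![b, c]]).PosSemidef)
    (hc : c = 0) : b = 0 := by
  by_contra hb
  have h1 := h.dotProduct_mulVec_nonneg ![1, -(a + 1) / (2 * b)]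
  rw [quad2, hc] at h1
  simp only [Matrix.cons_val_zero, Matrix.cons_val_one, Matrix.head_cons] at h1
  have : (2 : ℝ) * b ≠ 0 := by positivity
  field_simp at h1
  have hb2 : (0:ℝ) < b ^ 2 := by positivity
  rw [le_div_iff₀ hb2] at h1
  nlinarith

lemma isHermitian_of_isSymm {κ : Type} {A : Matrix κ κ ℝ} (h : A.IsSymm) : A.IsHermitian := by
  have he : Aᴴ = Aᵀ := by
    ext i j
    simp [Matrix.conjTranspose_apply]
  unfold Matrix.IsHermitian
  rw [he]
  exact h

lemma isSymm_two (a b c : ℝ) : (Matrix.of ![![a, b], ![b, c]]).IsSymm := by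
  apply Matrix.IsSymm.ext
  intro i j
  fin_cases i <;> fin_cases j <;> rfl

lemma schur_mem_pos {b c : ℝ} (hc : 0 < c) :
    (Matrix.of ![![c⁻¹ * b ^ 2, b], ![b, c]]).PosSemidef := by
  refine Matrix.PosSemidef.of_dotProduct_mulVec_nonneg (isHermitian_of_isSymm (isSymm_two _ _ _)) (fun x => ?_)
  rw [quad2]
  have hAc : (c⁻¹ * b ^ 2 * (x 0 * x 0) + 2 * b * (x 0 * x 1) + c * (x 1 * x 1)) * c
      = (b * x 0 + c * x 1) ^ 2 := by
    field_simp
    ring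
  have hq : (0:ℝ) ≤ (b * x 0 + c * x 1) ^ 2 := sq_nonneg _
  rw [← hAc] at hq
  rw [mul_comm] at hq
  exact nonneg_of_mul_nonneg_right hq hc

lemma schur_mem_zero : (Matrix.of ![![(0:ℝ), 0], ![0, 0]]).PosSemidef := by
  have : (Matrix.of ![![(0:ℝ), 0], ![0, 0]]) = 0 := by
    ext i j
    fin_cases i <;> fin_cases j <;> rfl
  rw [this]
  exact Matrix.PosSemidef.zero


/-- Data of a semidefinite representation of a set over an arbitrary finite coordinate type. -/
structure SDRData (ι : Type) [Fintype ι] (S : Set (ι → ℝ)) where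
  κ : Type
  μ : Type
  [instκ : Fintype κ]
  [instμ : Fintype μ]
  A : Matrix κ κ ℝ
  B : ι → Matrix κ κ ℝ
  C : μ → Matrix κ κ ℝ
  symA : A.IsSymm
  symB : ∀ i, (B i).IsSymm
  symC : ∀ j, (C j).IsSymm
  repr : S = {x | ∃ z : μ → ℝ, (A + ∑ i, x i • B i + ∑ j, z j • C j).PosSemidef}

attribute [instance] SDRData.instκ SDRData.instμ

def SDRRep {ι : Type} [Fintype ι] (S : Set (ι → ℝ)) : Prop := Nonempty (SDRData ι S)

variable {ι : Type} [Fintype ι]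

lemma SDRData.mem_iff {S : Set (ι → ℝ)} (d : SDRData ι S) (x : ι → ℝ) :
    x ∈ S ↔ ∃ z : d.μ → ℝ, (d.A + ∑ i, x i • d.B i + ∑ j, z j • d.C j).PosSemidef := by
  conv_lhs => rw [d.repr]
  rfl

/-- SDR sets are convex. -/
lemma SDRRep.convex {S : Set (ι → ℝ)} (h : SDRRep S) : Convex ℝ S := by
  obtain ⟨d⟩ := h
  rintro x hx y hy a b ha hb hab
  obtain ⟨zx, hzx⟩ := (d.mem_iff x).mp hx
  obtain ⟨zy, hzy⟩ := (d.mem_iff y).mp hy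
  rw [d.mem_iff]
  refine ⟨a • zx + b • zy, ?_⟩
  obtain rfl : b = 1 - a := by linarith
  have key : d.A + ∑ i, (a • x + (1 - a) • y) i • d.B i + ∑ j, (a • zx + (1 - a) • zy) j • d.C j
      = a • (d.A + ∑ i, x i • d.B i + ∑ j, zx j • d.C j)
        + (1 - a) • (d.A + ∑ i, y i • d.B i + ∑ j, zy j • d.C j) := by
    have h1 : ∑ i, (a • x + (1 - a) • y) i • d.B i
        = a • ∑ i, x i • d.B i + (1 - a) • ∑ i, y i • d.B i := by
      rw [Finset.smul_sum, Finset.smul_sum, ← Finset.sum_add_distrib]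
      refine Finset.sum_congr rfl fun i _ => ?_
      simp only [Pi.add_apply, Pi.smul_apply, smul_eq_mul, add_smul, smul_smul]
    have h2 : ∑ j, (a • zx + (1 - a) • zy) j • d.C j
        = a • ∑ j, zx j • d.C j + (1 - a) • ∑ j, zy j • d.C j := by
      rw [Finset.smul_sum, Finset.smul_sum, ← Finset.sum_add_distrib]
      refine Finset.sum_congr rfl fun j _ => ?_
      simp only [Pi.add_apply, Pi.smul_apply, smul_eq_mul, add_smul, smul_smul]
    rw [h1, h2]
    module
  rw [key]
  exact (psd_smul hzx ha).add (psd_smul hzy hb)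

/-- The whole space is SDR. -/
lemma sdrRep_univ : SDRRep (Set.univ : Set (ι → ℝ)) := by
  refine ⟨⟨Fin 0, Fin 0, 0, 0, 0, Matrix.isSymm_zero, fun _ => Matrix.isSymm_zero,
    fun _ => Matrix.isSymm_zero, ?_⟩⟩
  ext x
  simp only [Set.mem_univ, Set.mem_setOf_eq, true_iff]
  refine ⟨0, ?_⟩
  have : ((0 : Matrix (Fin 0) (Fin 0) ℝ) + ∑ i : ι, x i • (0 : ι → Matrix (Fin 0) (Fin 0) ℝ) i
      + ∑ j : Fin 0, (0 : Fin 0 → ℝ) j • (0 : Fin 0 → Matrix (Fin 0) (Fin 0) ℝ) j)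
      = 0 := by
    ext i
    exact i.elim0
  rw [this]
  exact Matrix.PosSemidef.zero

/-- Intersection of two SDR sets is SDR (block diagonal). -/
lemma SDRRep.inter {S T : Set (ι → ℝ)} (hS : SDRRep S) (hT : SDRRep T) : SDRRep (S ∩ T) := by
  obtain ⟨d⟩ := hS
  obtain ⟨e⟩ := hT
  refine ⟨⟨d.κ ⊕ e.κ, d.μ ⊕ e.μ,
    Matrix.fromBlocks d.A 0 0 e.A,
    fun i => Matrix.fromBlocks (d.B i) 0 0 (e.B i),
    Sum.elim (fun j => Matrix.fromBlocks (d.C j) 0 0 0)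
      (fun j => Matrix.fromBlocks 0 0 0 (e.C j)),
    d.symA.fromBlocks (by simp) e.symA,
    fun i => (d.symB i).fromBlocks (by simp) (e.symB i),
    ?_, ?_⟩⟩
  · rintro (j | j)
    · exact (d.symC j).fromBlocks (by simp) Matrix.isSymm_zero
    · exact Matrix.isSymm_zero.fromBlocks (by simp) (e.symC j)
  · ext x
    have key : ∀ z : d.μ ⊕ e.μ → ℝ,
        Matrix.fromBlocks d.A 0 0 e.A
          + ∑ i, x i • Matrix.fromBlocks (d.B i) 0 0 (e.B i)
          + ∑ j : d.μ ⊕ e.μ, z j • Sum.elim (fun j => Matrix.fromBlocks (d.C j) 0 0 0)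
              (fun j => Matrix.fromBlocks 0 0 0 (e.C j)) j
        = Matrix.fromBlocks
            (d.A + ∑ i, x i • d.B i + ∑ j, z (Sum.inl j) • d.C j) 0 0
            (e.A + ∑ i, x i • e.B i + ∑ j, z (Sum.inr j) • e.C j) := by
      intro z
      rw [Fintype.sum_sum_type]
      ext (i | i) (j | j) <;>
        simp [Matrix.sum_apply, Finset.sum_add_distrib]
    constructor
    · rintro ⟨hxS, hxT⟩
      obtain ⟨z₁, hz₁⟩ := (d.mem_iff x).mp hxS
      obtain ⟨z₂, hz₂⟩ := (e.mem_iff x).mp hxT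
      refine ⟨Sum.elim z₁ z₂, ?_⟩
      rw [key]
      exact psd_fromBlocks_iff.mpr ⟨by simpa using hz₁, by simpa using hz₂⟩
    · rintro ⟨z, hz⟩
      rw [key] at hz
      obtain ⟨h₁, h₂⟩ := psd_fromBlocks_iff.mp hz
      exact ⟨(d.mem_iff x).mpr ⟨_, h₁⟩, (e.mem_iff x).mpr ⟨_, h₂⟩⟩

section
variable {ι : Type} [Fintype ι]

/-- Finite intersections of SDR sets are SDR. -/
lemma sdrRep_iInter {σ : Type} [Fintype σ] (f : σ → Set (ι → ℝ))
    (h : ∀ s, SDRRep (f s)) : SDRRep (⋂ s, f s) := by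
  classical
  have key : ∀ A : Finset σ, SDRRep (⋂ s ∈ A, f s) := by
    intro A
    induction A using Finset.induction with
    | empty => simpa using sdrRep_univ
    | insert _ _ hx ih =>
      rw [Finset.set_biInter_insert]
      exact (h _).inter ih
  have := key Finset.univ
  simpa using this

/-- Pullback of an SDR set along a coordinate re-selection. -/
lemma SDRRep.comap {ι₂ : Type} [Fintype ι₂] [DecidableEq ι] {T : Set (ι₂ → ℝ)}
    (h : SDRRep T) (g : ι₂ → ι) :
    SDRRep {w : ι → ℝ | (fun i₂ => w (g i₂)) ∈ T} := by
  obtain ⟨d⟩ := h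
  refine ⟨⟨d.κ, d.μ, d.A, fun i => ∑ i₂ ∈ Finset.univ.filter (fun i₂ => g i₂ = i), d.B i₂,
    d.C, d.symA, fun i => isSymm_sum _ _ (fun i₂ _ => d.symB i₂), d.symC, ?_⟩⟩
  ext w
  have key : ∑ i, w i • ∑ i₂ ∈ Finset.univ.filter (fun i₂ => g i₂ = i), d.B i₂
      = ∑ i₂, w (g i₂) • d.B i₂ := by
    rw [← Finset.sum_fiberwise Finset.univ g (fun i₂ => w (g i₂) • d.B i₂)]
    refine Finset.sum_congr rfl fun i _ => ?_
    rw [Finset.smul_sum]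
    refine Finset.sum_congr rfl fun i₂ hi₂ => ?_
    rw [(Finset.mem_filter.mp hi₂).2]
  simp only [Set.mem_setOf_eq, key]
  rw [d.mem_iff]

/-- Projection of an SDR set. -/
lemma SDRRep.proj {σ : Type} [Fintype σ] {T : Set (ι ⊕ σ → ℝ)} (h : SDRRep T) :
    SDRRep {x : ι → ℝ | ∃ u : σ → ℝ, Sum.elim x u ∈ T} := by
  obtain ⟨d⟩ := h
  refine ⟨⟨d.κ, σ ⊕ d.μ, d.A, fun i => d.B (Sum.inl i),
    Sum.elim (fun s => d.B (Sum.inr s)) d.C, d.symA, fun i => d.symB _, ?_, ?_⟩⟩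
  · rintro (s | j)
    · exact d.symB _
    · exact d.symC _
  · ext x
    have key : ∀ (u : σ → ℝ) (z : d.μ → ℝ),
        d.A + ∑ i, x i • d.B (Sum.inl i)
          + ∑ v : σ ⊕ d.μ, Sum.elim u z v • Sum.elim (fun s => d.B (Sum.inr s)) d.C v
        = d.A + ∑ v : ι ⊕ σ, Sum.elim x u v • d.B v + ∑ j, z j • d.C j := by
      intro u z
      rw [Fintype.sum_sum_type, Fintype.sum_sum_type (f := fun v => Sum.elim x u v • d.B v)]
      simp only [Sum.elim_inl, Sum.elim_inr]
      abel
    constructor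
    · rintro ⟨u, hu⟩
      obtain ⟨z, hz⟩ := (d.mem_iff _).mp hu
      refine ⟨Sum.elim u z, ?_⟩
      show (d.A + ∑ i, x i • d.B (Sum.inl i)
        + ∑ v : σ ⊕ d.μ, Sum.elim u z v • Sum.elim (fun s => d.B (Sum.inr s)) d.C v).PosSemidef
      rw [key]
      exact hz
    · rintro ⟨uz, huz⟩
      have huz' : (d.A + ∑ i, x i • d.B (Sum.inl i)
          + ∑ v : σ ⊕ d.μ, uz v • Sum.elim (fun s => d.B (Sum.inr s)) d.C v).PosSemidef := huz
      refine ⟨fun s => uz (Sum.inl s), (d.mem_iff _).mpr ⟨fun j => uz (Sum.inr j), ?_⟩⟩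
      rw [← key]
      have huze : uz = Sum.elim (fun s => uz (Sum.inl s)) (fun j => uz (Sum.inr j)) := by
        ext (s | j) <;> rfl
      rw [← huze]
      exact huz'

/-- Half-spaces are SDR. -/
lemma sdrRep_halfspace (c : ℝ) (a : ι → ℝ) :
    SDRRep {w : ι → ℝ | 0 ≤ c + ∑ i, a i * w i} := by
  refine ⟨⟨Fin 1, Fin 0, Matrix.of fun _ _ => c, fun i => Matrix.of fun _ _ => a i, 0,
    ?_, fun i => ?_, fun j => Matrix.isSymm_zero, ?_⟩⟩
  · apply Matrix.IsSymm.ext; intro i j; rfl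
  · apply Matrix.IsSymm.ext; intro i j; rfl
  · ext w
    have key : (Matrix.of fun _ _ => c) + (∑ i, w i • Matrix.of fun (_ _ : Fin 1) => a i)
        = Matrix.of fun _ _ => (c + ∑ i, a i * w i) := by
      ext p q
      simp [Matrix.sum_apply, mul_comm]
    simp only [Set.mem_setOf_eq]
    constructor
    · intro hw
      refine ⟨0, ?_⟩
      simp only [Finset.univ_eq_empty, Finset.sum_empty, add_zero]
      rw [key]
      exact psd_one_dim.mpr hw
    · rintro ⟨z, hz⟩
      simp only [Finset.univ_eq_empty, Finset.sum_empty, add_zero] at hz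
      rw [key] at hz
      exact psd_one_dim.mp hz

/-- Affine hyperplanes are SDR. -/
lemma sdrRep_hyperplane (c : ℝ) (a : ι → ℝ) :
    SDRRep {w : ι → ℝ | c + ∑ i, a i * w i = 0} := by
  have h1 := sdrRep_halfspace c a
  have h2 := sdrRep_halfspace (-c) (fun i => -(a i))
  have : {w : ι → ℝ | c + ∑ i, a i * w i = 0}
      = {w : ι → ℝ | 0 ≤ c + ∑ i, a i * w i}
        ∩ {w : ι → ℝ | 0 ≤ -c + ∑ i, -(a i) * w i} := by
    ext w
    simp only [Set.mem_setOf_eq, Set.mem_inter_iff]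
    have : ∑ i, -(a i) * w i = -∑ i, a i * w i := by
      rw [← Finset.sum_neg_distrib]
      exact Finset.sum_congr rfl fun i _ => by ring
    rw [this]
    constructor
    · intro h; constructor <;> linarith
    · rintro ⟨h1, h2⟩; linarith
  rw [this]
  exact h1.inter h2

end

def schurSet : Set (Fin 3 → ℝ) := {v | (Matrix.of ![![v 0, v 1], ![v 1, v 2]]).PosSemidef}

lemma sdrRep_schurSet : SDRRep schurSet := by
  refine ⟨⟨Fin 2, Fin 0, 0,
    ![Matrix.of ![![1, 0], ![0, 0]], Matrix.of ![![0, 1], ![1, 0]], Matrix.of ![![0, 0], ![0, 1]]],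
    0, Matrix.isSymm_zero, ?_, fun j => Matrix.isSymm_zero, ?_⟩⟩
  · intro i
    fin_cases i <;>
      (apply Matrix.IsSymm.ext; intro p q; fin_cases p <;> fin_cases q <;> rfl)
  · ext v
    have key : (0 : Matrix (Fin 2) (Fin 2) ℝ) + (∑ i : Fin 3, v i •
        ![Matrix.of ![![(1:ℝ), 0], ![0, 0]], Matrix.of ![![0, 1], ![1, 0]],
          Matrix.of ![![0, 0], ![0, 1]]] i)
        = Matrix.of ![![v 0, v 1], ![v 1, v 2]] := by
      rw [Fin.sum_univ_three]
      ext p q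
      fin_cases p <;> fin_cases q <;>
        simp [Matrix.add_apply, Matrix.smul_apply]
    simp only [schurSet, Set.mem_setOf_eq]
    constructor
    · intro hv
      refine ⟨0, ?_⟩
      simp only [Finset.univ_eq_empty, Finset.sum_empty, add_zero]
      rw [key]
      exact hv
    · rintro ⟨z, hz⟩
      simp only [Finset.univ_eq_empty, Finset.sum_empty, add_zero] at hz
      rw [key] at hz
      exact hz

def nonnegSet : Set (Fin 1 → ℝ) := {v | 0 ≤ v 0}

lemma sdrRep_nonnegSet : SDRRep nonnegSet := by
  have h := sdrRep_halfspace (ι := Fin 1) 0 1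
  have : {w : Fin 1 → ℝ | 0 ≤ 0 + ∑ i, (1 : Fin 1 → ℝ) i * w i} = nonnegSet := by
    ext w
    simp [nonnegSet, Fin.sum_univ_one]
  rwa [this] at h

section Homog

variable {n k m' : ℕ} (A : Matrix (Fin k) (Fin k) ℝ)
  (B : Fin n → Matrix (Fin k) (Fin k) ℝ) (C : Fin m' → Matrix (Fin k) (Fin k) ℝ)

/-- The homogenization spectrahedron: `lam • A + ∑ y j • B j + ∑ z l • C l ⪰ 0`. -/
def homogSet : Set ((Unit ⊕ Fin n) ⊕ Fin m' → ℝ) :=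
  {v | (v (Sum.inl (Sum.inl ())) • A + ∑ j, v (Sum.inl (Sum.inr j)) • B j
      + ∑ l, v (Sum.inr l) • C l).PosSemidef}

lemma sdrRep_homogSet (hA : A.IsSymm) (hB : ∀ j, (B j).IsSymm) (hC : ∀ l, (C l).IsSymm) :
    SDRRep (homogSet A B C) := by
  refine ⟨⟨Fin k, Fin 0, 0, Sum.elim (Sum.elim (fun _ => A) B) C, 0,
    Matrix.isSymm_zero, ?_, fun j => Matrix.isSymm_zero, ?_⟩⟩
  · rintro ((u | j) | l)
    exacts [hA, hB j, hC l]
  · ext v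
    have key : (∑ w : (Unit ⊕ Fin n) ⊕ Fin m', v w • Sum.elim (Sum.elim (fun _ => A) B) C w)
        = v (Sum.inl (Sum.inl ())) • A + ∑ j, v (Sum.inl (Sum.inr j)) • B j
          + ∑ l, v (Sum.inr l) • C l := by
      rw [Fintype.sum_sum_type, Fintype.sum_sum_type]
      simp
    simp only [homogSet, Set.mem_setOf_eq]
    constructor
    · intro hv
      refine ⟨0, ?_⟩
      simp only [Finset.univ_eq_empty, Finset.sum_empty, add_zero, zero_add]
      rw [key]
      exact hv
    · rintro ⟨z, hz⟩
      simp only [Finset.univ_eq_empty, Finset.sum_empty, add_zero, zero_add] at hz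
      rw [key] at hz
      exact hz

/-- Index type for auxiliary variables of the lifted cone. -/
abbrev VAux (n m' : ℕ) := Fin m' ⊕ Fin n

abbrev VQ (n m' : ℕ) := (Unit ⊕ Fin n) ⊕ VAux n m'

def gH : (Unit ⊕ Fin n) ⊕ Fin m' → VQ n m' :=
  Sum.elim (fun c => Sum.inl c) (fun l => Sum.inr (Sum.inl l))

def gS (j : Fin n) : Fin 3 → VQ n m' :=
  ![Sum.inr (Sum.inr j), Sum.inl (Sum.inr j), Sum.inl (Sum.inl ())]

def g0 : Fin 1 → VQ n m' := fun _ => Sum.inl (Sum.inl ())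

/-- The big lifted spectrahedron. -/
def QBig : Set (VQ n m' → ℝ) :=
  {w | (fun v => w (gH v)) ∈ homogSet A B C}
    ∩ ((⋂ j : Fin n, {w | (fun s => w (gS j s)) ∈ schurSet})
      ∩ {w | (fun s => w (g0 s)) ∈ nonnegSet})

/-- The lifted cone over `S`: pairs `(lam, y)`. -/
def QSet : Set ((Unit ⊕ Fin n) → ℝ) :=
  {p | ∃ u : VAux n m' → ℝ, Sum.elim p u ∈ QBig A B C}

lemma sdrRep_QSet (hA : A.IsSymm) (hB : ∀ j, (B j).IsSymm) (hC : ∀ l, (C l).IsSymm) :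
    SDRRep (QSet A B C) :=
  SDRRep.proj (((sdrRep_homogSet A B C hA hB hC).comap gH).inter
    (((sdrRep_iInter _ fun j => sdrRep_schurSet.comap (gS j))).inter
      (sdrRep_nonnegSet.comap g0)))

lemma mem_QBig_iff (w : VQ n m' → ℝ) :
    w ∈ QBig A B C ↔
      (w (Sum.inl (Sum.inl ())) • A + ∑ j, w (Sum.inl (Sum.inr j)) • B j
          + ∑ l, w (Sum.inr (Sum.inl l)) • C l).PosSemidef
        ∧ (∀ j : Fin n, (Matrix.of ![![w (Sum.inr (Sum.inr j)), w (Sum.inl (Sum.inr j))],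
            ![w (Sum.inl (Sum.inr j)), w (Sum.inl (Sum.inl ()))]]).PosSemidef)
        ∧ 0 ≤ w (Sum.inl (Sum.inl ())) := by
  simp only [QBig, Set.mem_inter_iff, Set.mem_iInter, Set.mem_setOf_eq, homogSet, schurSet,
    nonnegSet, gH, gS, g0, Sum.elim_inl, Sum.elim_inr, Matrix.cons_val_zero, Matrix.cons_val_one,
    Matrix.head_cons]
  rfl

/-- Semantics of the lifted cone. -/
lemma mem_QSet_iff {Sset : Set (Fin n → ℝ)}
    (hrepr : Sset = {x | ∃ z : Fin m' → ℝ,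
      (A + ∑ i, x i • B i + ∑ j, z j • C j).PosSemidef})
    (p : (Unit ⊕ Fin n) → ℝ) :
    p ∈ QSet A B C ↔
      (p (Sum.inl ()) = 0 ∧ ∀ j, p (Sum.inr j) = 0)
        ∨ (0 < p (Sum.inl ())
            ∧ (fun j => (p (Sum.inl ()))⁻¹ * p (Sum.inr j)) ∈ Sset) := by
  constructor
  · rintro ⟨u, hu⟩
    rw [mem_QBig_iff] at hu
    obtain ⟨hH, hSch, hlam⟩ := hu
    simp only [Sum.elim_inl, Sum.elim_inr] at hH hSch hlam
    rcases eq_or_lt_of_le hlam with hlam0 | hlam0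
    · left
      refine ⟨hlam0.symm, fun j => ?_⟩
      exact schur_b_eq_zero (hSch j) hlam0.symm
    · right
      refine ⟨hlam0, ?_⟩
      rw [hrepr]
      refine ⟨fun l => (p (Sum.inl ()))⁻¹ * u (Sum.inl l), ?_⟩
      have key : A + ∑ i, ((p (Sum.inl ()))⁻¹ * p (Sum.inr i)) • B i
          + ∑ l, ((p (Sum.inl ()))⁻¹ * u (Sum.inl l)) • C l
          = (p (Sum.inl ()))⁻¹ • (p (Sum.inl ()) • A + ∑ j, p (Sum.inr j) • B j
            + ∑ l, u (Sum.inl l) • C l) := by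
        rw [smul_add, smul_add, Finset.smul_sum, Finset.smul_sum, smul_smul,
          inv_mul_cancel₀ hlam0.ne', one_smul]
        congr 1
        · congr 1
          exact Finset.sum_congr rfl fun i _ => by rw [smul_smul]
        · exact Finset.sum_congr rfl fun l _ => by rw [smul_smul]
      show (A + ∑ i, ((p (Sum.inl ()))⁻¹ * p (Sum.inr i)) • B i
          + ∑ l, ((p (Sum.inl ()))⁻¹ * u (Sum.inl l)) • C l).PosSemidef
      rw [key]
      exact psd_smul hH (inv_nonneg.mpr hlam0.le)
  · rintro (⟨hlam, hy⟩ | ⟨hlam, hmem⟩)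
    · refine ⟨0, ?_⟩
      rw [mem_QBig_iff]
      simp only [Sum.elim_inl, Sum.elim_inr, Pi.zero_apply, hlam, hy, zero_smul,
        Finset.sum_const_zero, add_zero, zero_add, smul_zero]
      exact ⟨Matrix.PosSemidef.zero, fun j => schur_mem_zero, le_refl 0⟩
    · rw [hrepr] at hmem
      obtain ⟨z, hz0⟩ := hmem
      have hz : (A + ∑ i, ((p (Sum.inl ()))⁻¹ * p (Sum.inr i)) • B i
          + ∑ j, z j • C j).PosSemidef := hz0
      refine ⟨Sum.elim (fun l => p (Sum.inl ()) * z l)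
        (fun j => (p (Sum.inl ()))⁻¹ * (p (Sum.inr j)) ^ 2), ?_⟩
      rw [mem_QBig_iff]
      simp only [Sum.elim_inl, Sum.elim_inr]
      refine ⟨?_, fun j => ?_, hlam.le⟩
      · have key : p (Sum.inl ()) • A + ∑ j, p (Sum.inr j) • B j
            + ∑ l, (p (Sum.inl ()) * z l) • C l
            = p (Sum.inl ()) • (A + ∑ i, ((p (Sum.inl ()))⁻¹ * p (Sum.inr i)) • B i
              + ∑ j, z j • C j) := by
          rw [smul_add, smul_add, Finset.smul_sum, Finset.smul_sum]
          congr 1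
          · congr 1
            refine Finset.sum_congr rfl fun i _ => ?_
            rw [smul_smul]
            congr 1
            rw [← mul_assoc, mul_inv_cancel₀ hlam.ne', one_mul]
          · exact Finset.sum_congr rfl fun l _ => by rw [smul_smul]
        rw [key]
        exact psd_smul hz hlam.le
      · exact schur_mem_pos hlam

end Homog
section Main

variable {n t : ℕ} (k m : Fin t → ℕ)
  (A : ∀ i, Matrix (Fin (k i)) (Fin (k i)) ℝ)
  (B : ∀ i, Fin n → Matrix (Fin (k i)) (Fin (k i)) ℝ)
  (C : ∀ i, Fin (m i) → Matrix (Fin (k i)) (Fin (k i)) ℝ)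

/-- coefficient vector for the constraint `∑ᵢ yᵢⱼ - xⱼ = 0`. -/
def aX (j : Fin n) : (Fin n ⊕ (Fin t × (Unit ⊕ Fin n))) → ℝ :=
  Sum.elim (fun j' => if j' = j then (-1 : ℝ) else 0)
    (fun p => Sum.elim (fun _ => (0 : ℝ)) (fun j' => if j' = j then (1 : ℝ) else 0) p.2)

/-- coefficient vector for the constraint `∑ᵢ lamᵢ = 1`. -/
def a0 : (Fin n ⊕ (Fin t × (Unit ⊕ Fin n))) → ℝ :=
  Sum.elim (fun _ => (0 : ℝ)) (fun p => Sum.elim (fun _ => (1 : ℝ)) (fun _ => (0 : ℝ)) p.2)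

lemma aX_sum (j : Fin n) (w : (Fin n ⊕ (Fin t × (Unit ⊕ Fin n))) → ℝ) :
    ∑ v, aX (n := n) (t := t) j v * w v
      = (∑ i : Fin t, w (Sum.inr (i, Sum.inr j))) - w (Sum.inl j) := by
  rw [Fintype.sum_sum_type]
  have h1 : ∑ j' : Fin n, aX (n := n) (t := t) j (Sum.inl j') * w (Sum.inl j')
      = -w (Sum.inl j) := by
    simp only [aX, Sum.elim_inl, ite_mul, neg_one_mul, zero_mul]
    rw [Finset.sum_ite_eq' Finset.univ j (fun j' => -w (Sum.inl j'))]
    simp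
  have h2 : ∑ p : Fin t × (Unit ⊕ Fin n), aX (n := n) (t := t) j (Sum.inr p) * w (Sum.inr p)
      = ∑ i : Fin t, w (Sum.inr (i, Sum.inr j)) := by
    rw [Fintype.sum_prod_type]
    refine Finset.sum_congr rfl fun i _ => ?_
    rw [Fintype.sum_sum_type]
    simp only [aX, Sum.elim_inr, Sum.elim_inl, zero_mul, Finset.sum_const_zero, zero_add,
      ite_mul, one_mul]
    rw [Finset.sum_ite_eq' Finset.univ j (fun j' => w (Sum.inr (i, Sum.inr j')))]
    simp
  rw [h1, h2]
  ring

lemma a0_sum (w : (Fin n ⊕ (Fin t × (Unit ⊕ Fin n))) → ℝ) :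
    ∑ v, a0 (n := n) (t := t) v * w v = ∑ i : Fin t, w (Sum.inr (i, Sum.inl ())) := by
  rw [Fintype.sum_sum_type]
  simp only [a0, Sum.elim_inl, Sum.elim_inr, zero_mul, Finset.sum_const_zero, zero_add]
  rw [Fintype.sum_prod_type]
  refine Finset.sum_congr rfl fun i _ => ?_
  rw [Fintype.sum_sum_type]
  simp

/-- The big spectrahedral lift. -/
def TBig : Set ((Fin n ⊕ (Fin t × (Unit ⊕ Fin n))) → ℝ) :=
  (⋂ i : Fin t, {w | (fun c => w (Sum.inr (i, c))) ∈ QSet (A i) (B i) (C i)})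
    ∩ ((⋂ j : Fin n, {w | (0 : ℝ) + ∑ v, aX (n := n) (t := t) j v * w v = 0})
      ∩ {w | (-1 : ℝ) + ∑ v, a0 (n := n) (t := t) v * w v = 0})

/-- The projection of the big lift. -/
def PBig : Set (Fin n → ℝ) :=
  {x | ∃ u : (Fin t × (Unit ⊕ Fin n)) → ℝ, Sum.elim x u ∈ TBig k m A B C}

lemma sdrRep_PBig (hA : ∀ i, (A i).IsSymm) (hB : ∀ i j, (B i j).IsSymm)
    (hC : ∀ i l, (C i l).IsSymm) : SDRRep (PBig k m A B C) :=
  SDRRep.proj ((sdrRep_iInter _ fun i =>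
      (sdrRep_QSet (A i) (B i) (C i) (hA i) (hB i) (hC i)).comap (fun c => Sum.inr (i, c))).inter
    ((sdrRep_iInter _ fun j => sdrRep_hyperplane 0 (aX j)).inter
      (sdrRep_hyperplane (-1) a0)))

lemma mem_TBig_iff (x : Fin n → ℝ) (u : (Fin t × (Unit ⊕ Fin n)) → ℝ) :
    Sum.elim x u ∈ TBig k m A B C ↔
      (∀ i, (fun c => u (i, c)) ∈ QSet (A i) (B i) (C i))
        ∧ (∀ j, x j = ∑ i : Fin t, u (i, Sum.inr j))
        ∧ (∑ i : Fin t, u (i, Sum.inl ())) = 1 := by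
  simp only [TBig, Set.mem_inter_iff, Set.mem_iInter, Set.mem_setOf_eq, Sum.elim_inr,
    Sum.elim_inl, aX_sum, a0_sum, zero_add]
  constructor
  · rintro ⟨h1, h2, h3⟩
    exact ⟨h1, fun j => by have := h2 j; linarith, by linarith⟩
  · rintro ⟨h1, h2, h3⟩
    exact ⟨h1, fun j => by have := h2 j; linarith, by linarith⟩

/-- The main set-level identity. -/
lemma convexHull_eq_PBig (S : Fin t → Set (Fin n → ℝ))
    (hrepr : ∀ i, S i = {x : Fin n → ℝ | ∃ z : Fin (m i) → ℝ,
      (A i + ∑ j, x j • B i j + ∑ l, z l • C i l).PosSemidef})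
    (hA : ∀ i, (A i).IsSymm) (hB : ∀ i j, (B i j).IsSymm) (hC : ∀ i l, (C i l).IsSymm) :
    convexHull ℝ (⋃ i, S i) = PBig k m A B C := by
  apply Set.Subset.antisymm
  · -- convex hull ⊆ P
    apply convexHull_min
    · rintro x hx
      rw [Set.mem_iUnion] at hx
      obtain ⟨i₀, hx⟩ := hx
      refine ⟨fun p => if p.1 = i₀ then Sum.elim (fun _ => 1) x p.2 else 0, ?_⟩
      rw [mem_TBig_iff]
      refine ⟨fun i => ?_, fun j => ?_, ?_⟩
      · rw [mem_QSet_iff (A i) (B i) (C i) (hrepr i)]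
        by_cases hi : i = i₀
        · subst hi
          right
          constructor
          · simp
          · have hxe : (fun j => ((if i = i then
                  Sum.elim (fun _ : Unit => (1:ℝ)) x (Sum.inl () : Unit ⊕ Fin n) else 0))⁻¹
                * (if i = i then
                  Sum.elim (fun _ : Unit => (1:ℝ)) x (Sum.inr j : Unit ⊕ Fin n) else 0)) = x := by
              funext j
              simp
            rw [hxe]
            exact hx
        · left
          simp [hi]
      · rw [Finset.sum_ite_eq' Finset.univ i₀
          (fun _ : Fin t => Sum.elim (fun _ : Unit => (1:ℝ)) x ((Sum.inr j : Unit ⊕ Fin n)))]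
        simp
      · rw [Finset.sum_ite_eq' Finset.univ i₀
          (fun _ : Fin t => Sum.elim (fun _ : Unit => (1:ℝ)) x ((Sum.inl () : Unit ⊕ Fin n)))]
        simp
    · exact (sdrRep_PBig k m A B C hA hB hC).convex
  · -- P ⊆ convex hull
    rintro x ⟨u, hu⟩
    rw [mem_TBig_iff] at hu
    obtain ⟨hQ, hXj, h1⟩ := hu
    have hsem : ∀ i, (u (i, Sum.inl ()) = 0 ∧ ∀ j, u (i, Sum.inr j) = 0)
        ∨ (0 < u (i, Sum.inl ())
            ∧ (fun j => (u (i, Sum.inl ()))⁻¹ * u (i, Sum.inr j)) ∈ S i) := fun i => by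
      have := (mem_QSet_iff (A i) (B i) (C i) (hrepr i) _).mp (hQ i)
      simpa using this
    set lam : Fin t → ℝ := fun i => u (i, Sum.inl ()) with hlam_def
    set p : Fin t → (Fin n → ℝ) := fun i => fun j => (lam i)⁻¹ * u (i, Sum.inr j) with hp_def
    have hlamnn : ∀ i, 0 ≤ lam i := fun i => by
      rcases hsem i with ⟨h, _⟩ | ⟨h, _⟩
      · rw [hlam_def]; simp [h]
      · exact h.le
    have hyp : ∀ i j, u (i, Sum.inr j) = lam i * p i j := by
      intro i j
      rcases hsem i with ⟨h0, hy0⟩ | ⟨hpos, _⟩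
      · rw [hy0 j, hp_def, hlam_def]
        simp [h0]
      · rw [hp_def]
        field_simp
        exact (mul_div_cancel_right₀ _ hpos.ne').symm
    have hxsum : x = ∑ i, lam i • p i := by
      funext j
      rw [Finset.sum_apply]
      rw [hXj j]
      refine Finset.sum_congr rfl fun i _ => ?_
      rw [hyp i j]
      simp
    have hcm : Finset.univ.centerMass lam p = x := by
      rw [Finset.centerMass_eq_of_sum_1 _ _ h1]
      exact hxsum.symm
    rw [← hcm, ← Finset.centerMass_filter_ne_zero]
    apply Finset.centerMass_mem_convexHull
    · intro i _
      exact hlamnn i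
    · rw [Finset.sum_filter_ne_zero, h1]
      exact one_pos
    · intro i hi
      rw [Finset.mem_filter] at hi
      rcases hsem i with ⟨h0, _⟩ | ⟨_, hmem⟩
      · exact absurd h0 hi.2
      · exact Set.mem_iUnion.mpr ⟨i, hmem⟩

end Main
end SDRProof

namespace SDRProof

lemma isSDR_of_sdrRep {n : ℕ} {S : Set (Fin n → ℝ)} (h : SDRRep S) : IsSDR S := by
  obtain ⟨d⟩ := h
  let eκ := Fintype.equivFin d.κ
  let eμ := Fintype.equivFin d.μ
  refine ⟨Fintype.card d.κ, Fintype.card d.μ,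
    d.A.submatrix eκ.symm eκ.symm,
    fun i => (d.B i).submatrix eκ.symm eκ.symm,
    fun j => (d.C (eμ.symm j)).submatrix eκ.symm eκ.symm,
    d.symA.submatrix _, fun i => (d.symB i).submatrix _, fun j => (d.symC _).submatrix _, ?_⟩
  ext x
  rw [d.mem_iff]
  simp only [Set.mem_setOf_eq]
  have key : ∀ z : d.μ → ℝ,
      (d.A + ∑ i, x i • d.B i + ∑ j, z j • d.C j).submatrix eκ.symm eκ.symm
        = d.A.submatrix eκ.symm eκ.symm + ∑ i, x i • (d.B i).submatrix eκ.symm eκ.symm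
          + ∑ j : Fin (Fintype.card d.μ),
              z (eμ.symm j) • (d.C (eμ.symm j)).submatrix eκ.symm eκ.symm := by
    intro z
    have h1 : ∑ j : Fin (Fintype.card d.μ),
        z (eμ.symm j) • (d.C (eμ.symm j)).submatrix eκ.symm eκ.symm
        = ∑ j : d.μ, z j • (d.C j).submatrix eκ.symm eκ.symm :=
      Equiv.sum_comp eμ.symm (fun j => z j • (d.C j).submatrix eκ.symm eκ.symm)
    rw [h1]
    ext p q
    simp [Matrix.sum_apply]
  constructor
  · rintro ⟨z, hz⟩
    refine ⟨fun j => z (eμ.symm j), ?_⟩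
    show (d.A.submatrix eκ.symm eκ.symm + ∑ i, x i • (d.B i).submatrix eκ.symm eκ.symm
      + ∑ j : Fin (Fintype.card d.μ),
          z (eμ.symm j) • (d.C (eμ.symm j)).submatrix eκ.symm eκ.symm).PosSemidef
    rw [← key z]
    exact hz.submatrix _
  · rintro ⟨z, hz⟩
    refine ⟨fun j => z (eμ j), ?_⟩
    have hz' : (d.A.submatrix eκ.symm eκ.symm + ∑ i, x i • (d.B i).submatrix eκ.symm eκ.symm
        + ∑ j : Fin (Fintype.card d.μ),
            z j • (d.C (eμ.symm j)).submatrix eκ.symm eκ.symm).PosSemidef := hz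
    show (d.A + ∑ i, x i • d.B i + ∑ j : d.μ, z (eμ j) • d.C j).PosSemidef
    have hmat : ((d.A + ∑ i, x i • d.B i
        + ∑ j : d.μ, z (eμ j) • d.C j).submatrix eκ.symm eκ.symm).PosSemidef := by
      rw [key (fun j => z (eμ j))]
      simp only [Equiv.apply_symm_apply]
      exact hz'
    exact (Matrix.posSemidef_submatrix_equiv eκ.symm).mp hmat

end SDRProof

/-- The convex hull of a finite union of projections of spectrahedra is again
a projection of a spectrahedron. -/
theorem convexHull_iUnion_isSDR {n t : ℕ} (S : Fin t → Set (Fin n → ℝ))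
    (hS : ∀ i, IsSDR (S i)) :
    IsSDR (convexHull ℝ (⋃ i, S i)) := by
  classical
  choose k m A B C hA hB hC hrepr using hS
  rw [SDRProof.convexHull_eq_PBig k m A B C S hrepr hA hB hC]
  exact SDRProof.isSDR_of_sdrRep (SDRProof.sdrRep_PBig k m A B C hA hB hC)
end
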